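/- arXiv:2308.11999 — 3 statements merged into one kernel-verified Lean document; each statement's English description precedes it below -/
import Mathlib

section
/- Let α ∈ (0,1) be irrational and β ∈ (0,1) with β ≥ max(α, 1 − α). Then, as N → ∞, (1/N)·#{ i ∈ {0,…,N−1} : {iα} < β and the gap after i equals 1 } tends to 2β − 1, and (1/N)·#{ i ∈ {0,…,N−1} : {iα} < β and the gap after i equals 2 } tends to 1 − β. -/
/-!
The orbit `{iα}` is equidistributed on intervals, by an elementary argument. Dirichlet's
theorem makes the orbit dense, so some rotation by `{kα}` moves an interval into any longer one
inside `[0, 1)`; this changes visit counts by at most `k`. Packing `m` disjoint intervals of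
length `1 / m` into `[0, 1)` then bounds the visits to an interval shorter than `1 / m` by
`N / m + O(1)`, which gives the upper density bound, and complements give the lower one.

When `β ≥ max(α, 1 - α)`, the gap after `i` depends only on `x = {iα}`: it is `1` when
`x < β - α` or `x ≥ 1 - α`, and `2` when `β - α ≤ x < 1 - α`. The two frequencies are thus the
lengths `(β - α) + (β - (1 - α)) = 2β - 1` and `(1 - α) - (β - α) = 1 - β`.
-/

open Filter Finset

theorem card_filter_range_le_add_of_imp_add {p q : ℕ → Prop} [DecidablePred p]
    [DecidablePred q] {k : ℕ} (h : ∀ i, p i → q (i + k)) (N : ℕ) :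
    #{i ∈ range N | p i} ≤ #{i ∈ range N | q i} + k := by
  set f : ℕ → ℕ := fun i => if q i then 1 else 0
  have hpq : #{i ∈ range N | p i} ≤ ∑ i ∈ range N, f (k + i) := by
    rw [card_filter]
    refine sum_le_sum fun i _ => ?_
    by_cases hp : p i
    · simp [f, hp, add_comm k i, h i hp]
    · simp [hp]
  have htail : ∑ i ∈ range k, f (N + i) ≤ k :=
    (sum_le_card_nsmul _ _ 1 fun i _ => by simp only [f]; split_ifs <;> simp).trans (by simp)
  have hq : #{i ∈ range N | q i} = ∑ i ∈ range N, f i := card_filter _ _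
  have hsplit := sum_range_add f k N
  have hsplit' := sum_range_add f N k
  rw [add_comm N k] at hsplit'
  omega

theorem exists_nat_mul_add_int_mem_Ioo_of_pos {θ a b : ℝ} (hθ : 0 < θ) (hθab : θ < b - a) :
    ∃ (m : ℕ) (w : ℤ), m * θ + w ∈ Set.Ioo a b := by
  have hc : 0 ≤ Int.fract a / θ := div_nonneg (Int.fract_nonneg a) hθ.le
  refine ⟨⌊Int.fract a / θ⌋₊ + 1, ⌊a⌋, ?_, ?_⟩
  · have := (div_lt_iff₀ hθ).1 (Nat.lt_floor_add_one (Int.fract a / θ))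
    push_cast
    linarith [Int.self_sub_fract a]
  · have := (le_div_iff₀ hθ).1 (Nat.floor_le hc)
    push_cast
    linarith [Int.self_sub_fract a]

theorem exists_nat_mul_add_int_mem_Ioo_of_ne_zero {θ a b : ℝ} (hθ : θ ≠ 0)
    (hθab : |θ| < b - a) : ∃ (m : ℕ) (w : ℤ), m * θ + w ∈ Set.Ioo a b := by
  rcases hθ.lt_or_gt with hneg | hpos
  · obtain ⟨m, w, h₁, h₂⟩ := exists_nat_mul_add_int_mem_Ioo_of_pos (a := -b) (b := -a)
      (neg_pos.2 hneg) (by rw [abs_of_neg hneg] at hθab; linarith)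
    exact ⟨m, -w, by push_cast; linarith, by push_cast; linarith⟩
  · exact exists_nat_mul_add_int_mem_Ioo_of_pos hpos (abs_of_pos hpos ▸ hθab)

theorem Irrational.exists_nat_mul_add_int_mem_Ioo {α : ℝ} (hα : Irrational α) {a b : ℝ}
    (hab : a < b) : ∃ (k : ℕ) (z : ℤ), k * α + z ∈ Set.Ioo a b := by
  obtain ⟨n, hn⟩ := exists_nat_one_div_lt (sub_pos.2 hab)
  obtain ⟨k, hk, -, hkα⟩ := Real.exists_nat_abs_mul_sub_round_le α n.succ_pos
  have hθ : k * α - round (k * α : ℝ) ≠ 0 :=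
    sub_ne_zero.2 ((hα.natCast_mul hk.ne').ne_int _)
  have hsmall : |k * α - round (k * α : ℝ)| < b - a := by
    refine hkα.trans_lt (lt_of_le_of_lt ?_ hn)
    gcongr
    linarith
  obtain ⟨m, w, hmw⟩ := exists_nat_mul_add_int_mem_Ioo_of_ne_zero hθ hsmall
  refine ⟨m * k, w - m * round (k * α : ℝ), ?_⟩
  convert hmw using 1
  push_cast
  ring

theorem tendsto_div_of_abs_sub_mul_le {f : ℕ → ℝ} {L : ℝ}
    (h : ∀ η > 0, ∃ K : ℝ, ∀ N : ℕ, |f N - L * N| ≤ η * N + K) :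
    Tendsto (fun N : ℕ => f N / N) atTop (nhds L) := by
  rw [Metric.tendsto_atTop]
  intro ε hε
  obtain ⟨K, hK⟩ := h (ε / 2) (half_pos hε)
  obtain ⟨N₀, hN₀⟩ := exists_nat_gt (2 * K / ε)
  refine ⟨N₀ + 1, fun N hN => ?_⟩
  have hNpos : (0 : ℝ) < N := by exact_mod_cast Nat.lt_of_lt_of_le N₀.succ_pos hN
  have hKN : K < ε / 2 * N := by
    have : (N₀ : ℝ) + 1 ≤ N := by exact_mod_cast hN
    rw [div_lt_iff₀ hε] at hN₀
    nlinarith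
  rw [Real.dist_eq, div_sub' hNpos.ne', abs_div, abs_of_pos hNpos, div_lt_iff₀ hNpos,
    mul_comm _ L]
  linarith [hK N]

open Classical in
noncomputable def visitCount (α : ℝ) (s : Set ℝ) (N : ℕ) : ℕ :=
  #{i ∈ range N | Int.fract (((i : ℕ) : ℝ) * α) ∈ s}

section visitCount

variable {α : ℝ}

theorem card_filter_eq_visitCount {p : ℕ → Prop} [DecidablePred p] {s : Set ℝ}
    (h : ∀ i : ℕ, p i ↔ Int.fract (i * α) ∈ s) (N : ℕ) :
    #{i ∈ range N | p i} = visitCount α s N := by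
  classical
  unfold visitCount
  congr 1
  exact filter_congr fun i _ => h i

theorem visitCount_mono {s t : Set ℝ} (hst : s ⊆ t) (N : ℕ) :
    visitCount α s N ≤ visitCount α t N := by
  classical
  exact card_le_card (monotone_filter_right _ fun _ _ hs => hst hs)

theorem visitCount_union {s t : Set ℝ} (hst : Disjoint s t) (N : ℕ) :
    visitCount α (s ∪ t) N = visitCount α s N + visitCount α t N := by
  classical
  unfold visitCount
  rw [← card_union_of_disjoint (disjoint_filter.2 fun _ _ hs ht => hst.notMem_of_mem_left hs ht),
    ← filter_or]
  simp only [Set.mem_union]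

theorem visitCount_Ico_zero_one (N : ℕ) : visitCount α (Set.Ico 0 1) N = N := by
  rw [← card_filter_eq_visitCount (p := fun _ => True) (s := Set.Ico 0 1) fun i =>
    iff_of_true trivial ⟨Int.fract_nonneg _, Int.fract_lt_one _⟩, filter_true, card_range]

theorem visitCount_Ico_add_Ico {u v w : ℝ} (huv : u ≤ v) (hvw : v ≤ w) (N : ℕ) :
    visitCount α (Set.Ico u w) N =
      visitCount α (Set.Ico u v) N + visitCount α (Set.Ico v w) N := by
  rw [← Set.Ico_union_Ico_eq_Ico huv hvw, visitCount_union (Set.Ico_disjoint_Ico_same)]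

theorem visitCount_Ico_add_mul (a : ℝ) {l : ℝ} (hl : 0 ≤ l) (q N : ℕ) :
    visitCount α (Set.Ico a (a + q * l)) N =
      ∑ r ∈ range q, visitCount α (Set.Ico (a + r * l) (a + (r + 1) * l)) N := by
  induction q with
  | zero => simp [visitCount]
  | succ q ih =>
    rw [sum_range_succ, ← ih, Nat.cast_succ]
    exact visitCount_Ico_add_Ico (by nlinarith [q.cast_nonneg (α := ℝ)]) (by nlinarith) N

theorem visitCount_le_add_of_shift {s t : Set ℝ} {k : ℕ}
    (h : ∀ i : ℕ, Int.fract (i * α) ∈ s → Int.fract (↑(i + k) * α) ∈ t) (N : ℕ) :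
    visitCount α s N ≤ visitCount α t N + k := by
  classical
  unfold visitCount
  exact card_filter_range_le_add_of_imp_add h N

end visitCount

namespace Irrational

variable {α : ℝ} (hα : Irrational α)
include hα

theorem exists_visitCount_Ico_le_add {u v u' v' : ℝ} (hu' : 0 ≤ u') (hv' : v' ≤ 1)
    (hlen : v - u < v' - u') :
    ∃ k : ℕ, ∀ N, visitCount α (Set.Ico u v) N ≤ visitCount α (Set.Ico u' v') N + k := by
  obtain ⟨k, z, hd₁, hd₂⟩ :=
    hα.exists_nat_mul_add_int_mem_Ioo (a := u' - u) (b := v' - v) (by linarith)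
  refine ⟨k, visitCount_le_add_of_shift fun i ⟨hi₁, hi₂⟩ => ?_⟩
  -- the rotation by `kα` moves `[u, v)` inside `[u', v')`
  have hshift : Int.fract (↑(i + k) * α) = Int.fract (i * α) + (k * α + z) := by
    refine Int.fract_eq_iff.2 ⟨by linarith, by linarith, ⌊(i : ℝ) * α⌋ - z, ?_⟩
    push_cast
    rw [← Int.self_sub_fract]
    ring
  rw [hshift]
  constructor <;> linarith

theorem exists_mul_visitCount_Ico_le {u v : ℝ} {m : ℕ} (hm : m * (v - u) < 1) :
    ∃ K : ℕ, ∀ N, m * visitCount α (Set.Ico u v) N ≤ N + K := by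
  rcases m.eq_zero_or_pos with rfl | hm₀
  · exact ⟨0, by simp⟩
  have hm₀' : (0 : ℝ) < m := by exact_mod_cast hm₀
  set l : ℝ := 1 / m
  have hpiece : ∀ r ∈ range m, ∃ k : ℕ, ∀ N, visitCount α (Set.Ico u v) N ≤
      visitCount α (Set.Ico (0 + r * l) (0 + (r + 1) * l)) N + k := by
    intro r hr
    have hr' : (r : ℝ) + 1 ≤ m := by exact_mod_cast mem_range.1 hr
    refine hα.exists_visitCount_Ico_le_add (by positivity) ?_ ?_
    · rw [zero_add, mul_one_div, div_le_one hm₀']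
      exact hr'
    · rw [show 0 + (r + 1) * l - (0 + r * l) = 1 / m by ring, lt_div_iff₀ hm₀', mul_comm]
      exact hm
  choose! k hk using hpiece
  refine ⟨∑ r ∈ range m, k r, fun N => ?_⟩
  calc m * visitCount α (Set.Ico u v) N
      = ∑ r ∈ range m, visitCount α (Set.Ico u v) N := by simp
    _ ≤ ∑ r ∈ range m, (visitCount α (Set.Ico (0 + r * l) (0 + (r + 1) * l)) N + k r) :=
        sum_le_sum fun r hr => hk r hr N
    _ = visitCount α (Set.Ico 0 (0 + m * l)) N + ∑ r ∈ range m, k r := by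
        rw [sum_add_distrib, visitCount_Ico_add_mul 0 (by positivity)]
    _ = N + ∑ r ∈ range m, k r := by
        rw [zero_add, mul_one_div_cancel hm₀'.ne', visitCount_Ico_zero_one]

theorem exists_visitCount_Ico_le {u v η : ℝ} (huv : u ≤ v) (hη : 0 < η) :
    ∃ K : ℝ, ∀ N : ℕ, (visitCount α (Set.Ico u v) N : ℝ) ≤ (v - u + η) * N + K := by
  obtain ⟨m, hm⟩ := exists_nat_gt ((v - u + 1) / η)
  have hm₀ : (0 : ℝ) < m := lt_of_le_of_lt (by positivity) hm
  set l : ℝ := 1 / (m + 1)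
  set q := ⌈(v - u) * (m + 1)⌉₊
  have hcover : v ≤ u + q * l := by
    have := Nat.le_ceil ((v - u) * (m + 1))
    rw [← sub_le_iff_le_add', mul_one_div, le_div_iff₀ (by positivity)]
    exact this
  have hq : (q : ℝ) ≤ (v - u + η) * m := by
    have := Nat.ceil_lt_add_one (mul_nonneg (sub_nonneg.2 huv) (by positivity : (0 : ℝ) ≤ m + 1))
    rw [div_lt_iff₀ hη] at hm
    nlinarith
  have hpiece : ∀ r ∈ range q, ∃ K : ℕ, ∀ N,
      m * visitCount α (Set.Ico (u + r * l) (u + (r + 1) * l)) N ≤ N + K := by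
    intro r _
    refine hα.exists_mul_visitCount_Ico_le ?_
    rw [show u + (r + 1) * l - (u + r * l) = 1 / (m + 1) by ring, mul_one_div,
      div_lt_one (by positivity)]
    linarith
  choose! K hK using hpiece
  refine ⟨(∑ r ∈ range q, K r : ℕ) / m, fun N => ?_⟩
  have hnat : m * visitCount α (Set.Ico u v) N ≤ q * N + ∑ r ∈ range q, K r :=
    calc m * visitCount α (Set.Ico u v) N
        ≤ m * visitCount α (Set.Ico u (u + q * l)) N :=
          Nat.mul_le_mul_left _ (visitCount_mono (Set.Ico_subset_Ico_right hcover) N)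
      _ = ∑ r ∈ range q, m * visitCount α (Set.Ico (u + r * l) (u + (r + 1) * l)) N := by
          rw [visitCount_Ico_add_mul u (by positivity), mul_sum]
      _ ≤ ∑ r ∈ range q, (N + K r) := sum_le_sum fun r hr => hK r hr N
      _ = q * N + ∑ r ∈ range q, K r := by simp [sum_add_distrib]
  have hreal : (m : ℝ) * visitCount α (Set.Ico u v) N ≤ q * N + ∑ r ∈ range q, K r := by
    exact_mod_cast hnat
  rw [← mul_le_mul_iff_of_pos_left hm₀, mul_add, mul_div_cancel₀ _ hm₀.ne']
  nlinarith [(N.cast_nonneg : (0 : ℝ) ≤ N)]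

theorem exists_abs_visitCount_Ico_sub_le {u v η : ℝ} (hu : 0 ≤ u) (huv : u ≤ v) (hv : v ≤ 1)
    (hη : 0 < η) : ∃ K : ℝ, ∀ N : ℕ,
      |(visitCount α (Set.Ico u v) N : ℝ) - (v - u) * N| ≤ η * N + K := by
  obtain ⟨K, hK⟩ := hα.exists_visitCount_Ico_le huv hη
  obtain ⟨K₀, hK₀⟩ := hα.exists_visitCount_Ico_le hu (half_pos hη)
  obtain ⟨K₁, hK₁⟩ := hα.exists_visitCount_Ico_le hv (half_pos hη)
  refine ⟨max K (K₀ + K₁), fun N => abs_le.2 ⟨?_, ?_⟩⟩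
  · -- `[0, u)`, `[u, v)` and `[v, 1)` share the `N` visits
    have hsum : N = visitCount α (Set.Ico 0 u) N + visitCount α (Set.Ico u v) N +
        visitCount α (Set.Ico v 1) N := by
      rw [← visitCount_Ico_add_Ico hu huv, ← visitCount_Ico_add_Ico (hu.trans huv) hv,
        visitCount_Ico_zero_one]
    replace hsum : (N : ℝ) = _ := congrArg (Nat.cast : ℕ → ℝ) hsum
    push_cast at hsum
    linarith [hK₀ N, hK₁ N, le_max_right K (K₀ + K₁)]
  · linarith [hK N, le_max_left K (K₀ + K₁)]

theorem tendsto_visitCount_Ico_div {u v : ℝ} (hu : 0 ≤ u) (huv : u ≤ v) (hv : v ≤ 1) :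
    Tendsto (fun N : ℕ => (visitCount α (Set.Ico u v) N : ℝ) / N) atTop (nhds (v - u)) :=
  tendsto_div_of_abs_sub_mul_le fun _ hη => hα.exists_abs_visitCount_Ico_sub_le hu huv hv hη

end Irrational

theorem Nat.sInf_setOf_pos_and_eq_iff {P : ℕ → Prop} {m : ℕ} (hm : 0 < m) :
    sInf {e | 0 < e ∧ P e} = m ↔ P m ∧ ∀ e, 0 < e → e < m → ¬P e := by
  constructor
  · rintro rfl
    exact ⟨(Nat.sInf_mem (Nat.nonempty_of_pos_sInf hm)).2,
      fun e he hlt hP => (Nat.sInf_le (show e ∈ {e | 0 < e ∧ P e} from ⟨he, hP⟩)).not_gt hlt⟩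
  · rintro ⟨hP, hmin⟩
    exact le_antisymm (Nat.sInf_le (show m ∈ {e | 0 < e ∧ P e} from ⟨hm, hP⟩))
      (le_csInf ⟨m, hm, hP⟩ fun e ⟨he, hPe⟩ => not_lt.1 fun hlt => hmin e he hlt hPe)

noncomputable def gapAfter (α β : ℝ) (i : ℕ) : ℕ :=
  sInf {e : ℕ | 0 < e ∧ Int.fract (((i : ℝ) + (e : ℝ)) * α) < β}

section gapAfter

variable {α β : ℝ}

theorem fract_natCast_add_mul (i e : ℕ) :
    Int.fract (((i : ℝ) + e) * α) = Int.fract (Int.fract (i * α) + e * α) :=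
  Int.fract_eq_fract.2 ⟨⌊(i : ℝ) * α⌋, by rw [← Int.self_sub_fract]; ring⟩

variable (hα : α ∈ Set.Ioo 0 1)
include hα

theorem fract_add_lt_iff (hαβ : α ≤ β) {x : ℝ} (hx : x ∈ Set.Ico 0 1) :
    Int.fract (x + α) < β ↔ x < β - α ∨ 1 - α ≤ x := by
  obtain ⟨hα₀, hα₁⟩ := hα
  obtain ⟨hx₀, hx₁⟩ := hx
  by_cases hwrap : x + α < 1
  · rw [Int.fract_eq_self.2 ⟨by linarith, hwrap⟩]
    constructor
    · exact fun h => Or.inl (by linarith)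
    · rintro (h | h) <;> linarith
  · rw [(Int.fract_eq_iff (b := x + α - 1)).2 ⟨by linarith, by linarith, 1, by push_cast; ring⟩]
    exact iff_of_true (by linarith) (Or.inr (by linarith))

theorem fract_lt_and_gapAfter_eq_one_iff (hαβ : α ≤ β) (i : ℕ) :
    Int.fract (i * α) < β ∧ gapAfter α β i = 1 ↔
      Int.fract (i * α) ∈ Set.Ico 0 (β - α) ∪ Set.Ico (1 - α) β := by
  have hx : Int.fract ((i : ℝ) * α) ∈ Set.Ico 0 1 := ⟨Int.fract_nonneg _, Int.fract_lt_one _⟩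
  rw [gapAfter, Nat.sInf_setOf_pos_and_eq_iff one_pos, fract_natCast_add_mul, Nat.cast_one,
    one_mul, fract_add_lt_iff hα hαβ hx, and_iff_left fun e he he₁ => absurd he₁ (by omega)]
  simp only [Set.mem_union, Set.mem_Ico]
  constructor
  · rintro ⟨hβ, h | h⟩
    exacts [Or.inl ⟨hx.1, h⟩, Or.inr ⟨h, hβ⟩]
  · rintro (⟨-, h⟩ | ⟨h, hβ⟩)
    exacts [⟨by linarith [hα.1], Or.inl h⟩, ⟨hβ, Or.inr h⟩]

theorem fract_lt_and_gapAfter_eq_two_iff (hβ : max α (1 - α) ≤ β) (i : ℕ) :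
    Int.fract (i * α) < β ∧ gapAfter α β i = 2 ↔
      Int.fract (i * α) ∈ Set.Ico (β - α) (1 - α) := by
  obtain ⟨hαβ, h1αβ⟩ := max_le_iff.1 hβ
  set x := Int.fract ((i : ℝ) * α)
  have hx : x ∈ Set.Ico 0 1 := ⟨Int.fract_nonneg _, Int.fract_lt_one _⟩
  have hfirst : (∀ e : ℕ, 0 < e → e < 2 → ¬Int.fract (((i : ℝ) + e) * α) < β) ↔
      ¬Int.fract (x + α) < β := by
    have h₁ : Int.fract (((i : ℝ) + (1 : ℕ)) * α) = Int.fract (x + α) := by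
      rw [fract_natCast_add_mul, Nat.cast_one, one_mul]
    refine ⟨fun h => h₁ ▸ h 1 one_pos one_lt_two, fun h e he he₂ => ?_⟩
    obtain rfl : e = 1 := by omega
    exact h₁ ▸ h
  rw [gapAfter, Nat.sInf_setOf_pos_and_eq_iff two_pos, hfirst, fract_add_lt_iff hα hαβ hx,
    fract_natCast_add_mul, Nat.cast_ofNat]
  simp only [not_or, not_lt, not_le]
  constructor
  · rintro ⟨-, -, h⟩
    exact h
  · rintro ⟨hlo, hhi⟩
    -- two steps of `α` wrap around once, landing below `α ≤ β`
    have hwrap : Int.fract (x + 2 * α) = x + 2 * α - 1 :=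
      Int.fract_eq_iff.2 ⟨by linarith, by linarith [hα.2], 1, by push_cast; ring⟩
    exact ⟨by linarith, by rw [hwrap]; linarith, hlo, hhi⟩

end gapAfter

/-- **Three gap theorem, case 1**, frequencies: with `β ≥ max(α, 1-α)`,
the asymptotic frequency of indices `i` with `{iα} < β` whose gap is `1`
equals `2β - 1`, and the frequency of those whose gap is `2` equals `1 - β`. -/
theorem three_gap_case_one_frequencies
    (α β : ℝ) (hα : α ∈ Set.Ioo (0 : ℝ) 1) (hirr : Irrational α)
    (hβ : β ∈ Set.Ioo (0 : ℝ) 1) (hβmax : max α (1 - α) ≤ β) :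
    let gap : ℕ → ℕ := fun i => sInf {e : ℕ | 0 < e ∧ Int.fract (((i : ℝ) + (e : ℝ)) * α) < β}
    Tendsto (fun N : ℕ =>
        (((Finset.range N).filter
            (fun i : ℕ => Int.fract ((i : ℝ) * α) < β ∧ gap i = 1)).card : ℝ) / (N : ℝ))
      atTop (nhds (2 * β - 1)) ∧
    Tendsto (fun N : ℕ =>
        (((Finset.range N).filter
            (fun i : ℕ => Int.fract ((i : ℝ) * α) < β ∧ gap i = 2)).card : ℝ) / (N : ℝ))
      atTop (nhds (1 - β)) := by
  intro gap
  obtain ⟨hαβ, h1αβ⟩ := max_le_iff.1 hβmax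
  simp only [gap, ← gapAfter.eq_1]
  have hα₁ := hα.2
  have hβ₁ := hβ.2
  have hgap₁ := card_filter_eq_visitCount (fract_lt_and_gapAfter_eq_one_iff hα hαβ)
  have hgap₂ := card_filter_eq_visitCount (fract_lt_and_gapAfter_eq_two_iff hα hβmax)
  refine ⟨?_, ?_⟩
  · have hdisj : Disjoint (Set.Ico 0 (β - α)) (Set.Ico (1 - α) β) :=
      Set.Ico_disjoint_Ico.2 (le_max_of_le_right (min_le_of_left_le (by linarith)))
    simp_rw [hgap₁, visitCount_union hdisj, Nat.cast_add, add_div]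
    convert (hirr.tendsto_visitCount_Ico_div (u := 0) (v := β - α) le_rfl (by linarith)
      (by linarith)).add (hirr.tendsto_visitCount_Ico_div (by linarith) h1αβ hβ₁.le) using 2
    ring
  · simp_rw [hgap₂]
    convert hirr.tendsto_visitCount_Ico_div (u := β - α) (v := 1 - α) (by linarith) (by linarith)
      (by linarith) using 2
    ring
end

section
/- In the three-gap setting with β < max(α, 1 − α), one has b ≠ d, the fractional part of (b − d)α (as a real number, b − d possibly negative) equals s + t, and β ≤ s + t. -/
/-!
Both `b` and `d` exist because `{nα}` (`n ≥ 1`) is dense in `[0, 1)`: Dirichlet's theorem gives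
`m ≥ 1` with `{mα}` or `1 - {mα}` small, and positive by irrationality, and the multiples of `m`
then sweep `[0, 1)` in steps of that size.

One has `{bα} < {dα}`: otherwise `1 - β < {dα} ≤ {bα} < β`, so `β > 1/2`, and `β < max(α, 1 - α)`
makes `1` the least element of one of the two defining sets while `α` avoids the other.
Consequently `{(b - d)α} = {bα} + 1 - {dα} = s + t` and `b ≠ d`. Finally, if `s + t < β`, then
`b - d` (when `d < b`) would undercut `b`, and `d - b` (when `b < d`) would undercut `d`, since
`{(d - b)α} = 1 - (s + t)`.
-/

open Int Set

section Fract

variable {R : Type*} [CommRing R] [LinearOrder R] [IsStrictOrderedRing R] [FloorRing R]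

theorem Int.fract_sub_of_le {x y : R} (h : fract y ≤ fract x) :
    fract (x - y) = fract x - fract y := by
  rw [fract_eq_iff]
  refine ⟨sub_nonneg.2 h, by linarith [fract_nonneg y, fract_lt_one x], ⌊x⌋ - ⌊y⌋, ?_⟩
  unfold fract
  push_cast
  ring

theorem Int.fract_sub_of_lt {x y : R} (h : fract x < fract y) :
    fract (x - y) = fract x - fract y + 1 := by
  rw [fract_eq_iff]
  refine ⟨by linarith [fract_nonneg x, fract_lt_one y], by linarith, ⌊x⌋ - ⌊y⌋ - 1, ?_⟩
  unfold fract
  push_cast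
  ring

theorem Int.fract_natCast_mul_fract (n : ℕ) (x : R) : fract (n * fract x) = fract (n * x) := by
  conv_rhs => rw [← fract_add_floor x, mul_add]
  exact_mod_cast (fract_add_intCast _ (n * ⌊x⌋)).symm

end Fract

theorem exists_pos_fract_natCast_mul_lt_or_gt (α : ℝ) {ε : ℝ} (hε : 0 < ε) :
    ∃ m : ℕ, 0 < m ∧ (fract (m * α) < ε ∨ 1 - ε < fract (m * α)) := by
  obtain ⟨n, hn⟩ := exists_nat_one_div_lt hε
  obtain ⟨m, hm, -, hmα⟩ := Real.exists_nat_abs_mul_sub_round_le α n.succ_pos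
  have hmin : min (fract (m * α)) (1 - fract (m * α)) < ε := by
    rw [← abs_sub_round_eq_min]
    refine hmα.trans_lt (lt_of_le_of_lt ?_ hn)
    gcongr
    linarith
  exact ⟨m, hm, (min_lt_iff.1 hmin).imp id fun h => by linarith⟩

theorem exists_pos_fract_natCast_mul_mem_Ioo_of_fract_lt {α a b : ℝ} {m : ℕ} (hm : 0 < m)
    (hpos : 0 < fract (m * α)) (hlt : fract (m * α) < b - a) (ha : 0 ≤ a) (hb : b ≤ 1) :
    ∃ n : ℕ, 0 < n ∧ fract (n * α) ∈ Ioo a b := by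
  set δ := fract (m * α)
  set k := ⌊a / δ⌋₊ + 1
  have hak : a < k * δ := by
    have := Nat.lt_floor_add_one (a / δ)
    rw [div_lt_iff₀ hpos] at this
    simpa [k] using this
  have hka : k * δ ≤ a + δ := by
    have := Nat.floor_le (div_nonneg ha hpos.le)
    rw [le_div_iff₀ hpos] at this
    push_cast [k]
    linarith
  refine ⟨k * m, by positivity, ?_⟩
  rw [Nat.cast_mul, mul_assoc, ← fract_natCast_mul_fract,
    fract_eq_self.2 ⟨by linarith, by linarith⟩]
  exact ⟨hak, by linarith⟩

namespace Irrational

variable {α : ℝ}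

theorem fract_natCast_mul_pos (hα : Irrational α) {n : ℕ} (hn : n ≠ 0) :
    0 < fract (n * α) := by
  refine (fract_nonneg _).lt_of_ne' fun h => ?_
  obtain ⟨z, hz⟩ := fract_eq_zero_iff.1 h
  exact (hα.natCast_mul hn).ne_int z hz.symm

theorem fract_natCast_mul_neg (hα : Irrational α) {n : ℕ} (hn : n ≠ 0) :
    fract (n * -α) = 1 - fract (n * α) := by
  rw [mul_neg, fract_neg (hα.fract_natCast_mul_pos hn).ne']

theorem exists_pos_fract_natCast_mul_mem_Ioo (hα : Irrational α) {a b : ℝ} (ha : 0 ≤ a)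
    (hab : a < b) (hb : b ≤ 1) : ∃ n : ℕ, 0 < n ∧ fract (n * α) ∈ Ioo a b := by
  obtain ⟨m, hm, hnear | hnear⟩ := exists_pos_fract_natCast_mul_lt_or_gt α (sub_pos.2 hab)
  · exact exists_pos_fract_natCast_mul_mem_Ioo_of_fract_lt hm
      (hα.fract_natCast_mul_pos hm.ne') hnear ha hb
  · -- the multiples of `m` step backwards: sweep the reflected interval with `-α` instead
    obtain ⟨n, hn, hmem⟩ := exists_pos_fract_natCast_mul_mem_Ioo_of_fract_lt (a := 1 - b) (b := 1 - a) hm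
      (hα.neg.fract_natCast_mul_pos hm.ne')
      (by rw [hα.fract_natCast_mul_neg hm.ne']; linarith) (by linarith) (by linarith)
    rw [hα.fract_natCast_mul_neg hn.ne', mem_Ioo] at hmem
    exact ⟨n, hn, by linarith [hmem.2], by linarith [hmem.1]⟩

end Irrational

section ThreeGap

variable {α β : ℝ} {b d : ℕ}

theorem fract_mul_lt_fract_mul_of_lt_max (hα : α ∈ Ioo 0 1) (hβmax : β < max α (1 - α))
    (hb : IsLeast {m : ℕ | 0 < m ∧ fract ((m : ℝ) * α) < β} b)
    (hd : IsLeast {m : ℕ | 0 < m ∧ 1 - β < fract ((m : ℝ) * α)} d) :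
    fract (b * α) < fract (d * α) := by
  by_contra! hle
  have hbβ := hb.1.2
  have hdβ := hd.1.2
  have hfα : fract ((1 : ℕ) * α) = α := by
    rw [Nat.cast_one, one_mul, fract_eq_self]
    exact ⟨hα.1.le, hα.2⟩
  rcases lt_max_iff.1 hβmax with hβα | hβα
  · have hd1 : d = 1 := le_antisymm (hd.2 ⟨one_pos, by rw [hfα]; linarith⟩) hd.1.1
    rw [hd1, hfα] at hle hdβ
    linarith
  · have hb1 : b = 1 := le_antisymm (hb.2 ⟨one_pos, by rw [hfα]; linarith⟩) hb.1.1
    rw [hb1, hfα] at hle hbβ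
    linarith

theorem le_fract_mul_add_one_sub_fract_mul
    (hb : IsLeast {m : ℕ | 0 < m ∧ fract ((m : ℝ) * α) < β} b)
    (hd : IsLeast {m : ℕ | 0 < m ∧ 1 - β < fract ((m : ℝ) * α)} d)
    (hlt : fract (b * α) < fract (d * α)) :
    β ≤ fract (b * α) + (1 - fract (d * α)) := by
  by_contra! hsum
  rcases lt_or_gt_of_ne (ne_of_apply_ne (fun n : ℕ => fract ((n : ℝ) * α)) hlt.ne) with hbd | hdb
  · have hmem : d - b ∈ {m : ℕ | 0 < m ∧ 1 - β < fract ((m : ℝ) * α)} := by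
      refine ⟨Nat.sub_pos_of_lt hbd, ?_⟩
      rw [Nat.cast_sub hbd.le, sub_mul, fract_sub_of_le hlt.le]
      linarith
    have := hd.2 hmem
    have := hb.1.1
    omega
  · have hmem : b - d ∈ {m : ℕ | 0 < m ∧ fract ((m : ℝ) * α) < β} := by
      refine ⟨Nat.sub_pos_of_lt hdb, ?_⟩
      rw [Nat.cast_sub hdb.le, sub_mul, fract_sub_of_lt hlt]
      linarith
    have := hb.2 hmem
    have := hd.1.1
    omega

end ThreeGap

/-- In the three-gap setting with `β < max(α, 1-α)`: `b ≠ d`, the fractional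
part of `(b - d)α` equals `s + t`, and `β ≤ s + t`. -/
theorem three_gap_b_ne_d_and_beta_le_s_add_t
    (α β : ℝ) (hα : α ∈ Set.Ioo (0 : ℝ) 1) (hirr : Irrational α)
    (hβ : β ∈ Set.Ioo (0 : ℝ) 1) (hβmax : β < max α (1 - α)) :
    let b : ℕ := sInf {m : ℕ | 0 < m ∧ Int.fract ((m : ℝ) * α) < β}
    let d : ℕ := sInf {m : ℕ | 0 < m ∧ 1 - β < Int.fract ((m : ℝ) * α)}
    let s : ℝ := Int.fract ((b : ℝ) * α)
    let t : ℝ := 1 - Int.fract ((d : ℝ) * α)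
    b ≠ d ∧ Int.fract (((b : ℝ) - (d : ℝ)) * α) = s + t ∧ β ≤ s + t := by
  intro b d s t
  have hb : IsLeast {m : ℕ | 0 < m ∧ fract ((m : ℝ) * α) < β} b := by
    refine isLeast_csInf ?_
    obtain ⟨n, hn, hmem⟩ := hirr.exists_pos_fract_natCast_mul_mem_Ioo le_rfl hβ.1 hβ.2.le
    exact ⟨n, hn, hmem.2⟩
  have hd : IsLeast {m : ℕ | 0 < m ∧ 1 - β < fract ((m : ℝ) * α)} d := by
    refine isLeast_csInf ?_
    obtain ⟨n, hn, hmem⟩ :=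
      hirr.exists_pos_fract_natCast_mul_mem_Ioo (a := 1 - β) (by linarith [hβ.2]) (by linarith [hβ.1]) le_rfl
    exact ⟨n, hn, hmem.1⟩
  have hlt := fract_mul_lt_fract_mul_of_lt_max hα hβmax hb hd
  refine ⟨ne_of_apply_ne (fun n : ℕ => fract ((n : ℝ) * α)) hlt.ne, ?_,
    le_fract_mul_add_one_sub_fract_mul hb hd hlt⟩
  rw [sub_mul, fract_sub_of_lt hlt]
  ring
end

section
/- In the three-gap setting with β < max(α, 1 − α), if i is a natural number with {iα} ∈ [β − s, t), then the gap after i equals b + d. -/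
/-!
Write `x = {iα}`, `s = {bα}` and `{dα} = 1 - t`. Adding `dα` and then `bα` to `x` wraps
around once, so `{(i + b + d)α} = x + s - t ∈ [β - t, s) ⊆ (0, β)` and `b + d` is admissible.
Conversely let `e > 0` with `{(i + e)α} < β` and `y = {eα}`. If `x + y < 1` then
`y < β - x ≤ s`, so `e > b` and `{(e - b)α} = 1 + y - s > 1 - β`, whence `e - b ≥ d`.
Otherwise irrationality gives `x + y > 1`, so `y > 1 - x > {dα}`, whence `e > d` and
`{(e - d)α} = y - {dα} < β`, so `e - d ≥ b`.

`b` and `d` exist because Dirichlet's theorem gives a multiple `k` with `{kα}` close to `0` or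
to `1`, and then `{jkα}`, `j = 1, 2, …`, crosses to the other end of `[0, 1)` in small steps.
-/

section

open Int

namespace Int

variable {R : Type*} [Ring R] [LinearOrder R] [IsStrictOrderedRing R] [FloorRing R] {a b : R}

theorem fract_add_of_fract_add_fract_lt_one (h : fract a + fract b < 1) :
    fract (a + b) = fract a + fract b :=
  fract_eq_iff.2 ⟨add_nonneg (fract_nonneg a) (fract_nonneg b), h, ⌊a⌋ + ⌊b⌋, by
    rw [cast_add, ← self_sub_floor a, ← self_sub_floor b]; abel⟩

theorem fract_add_of_one_le_fract_add_fract (h : 1 ≤ fract a + fract b) :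
    fract (a + b) = fract a + fract b - 1 :=
  fract_eq_iff.2 ⟨sub_nonneg.2 h,
    sub_lt_iff_lt_add.2 (add_lt_add (fract_lt_one a) (fract_lt_one b)),
    ⌊a⌋ + ⌊b⌋ + 1, by
      rw [cast_add, cast_add, cast_one, ← self_sub_floor a, ← self_sub_floor b]; abel⟩

theorem fract_sub_of_fract_le (h : fract b ≤ fract a) : fract (a - b) = fract a - fract b :=
  fract_eq_iff.2 ⟨sub_nonneg.2 h, (sub_le_self _ (fract_nonneg b)).trans_lt (fract_lt_one a),
    ⌊a⌋ - ⌊b⌋, by rw [cast_sub, ← self_sub_floor a, ← self_sub_floor b]; abel⟩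

theorem fract_sub_of_fract_lt (h : fract a < fract b) : fract (a - b) = fract a - fract b + 1 :=
  fract_eq_iff.2 ⟨by
      rw [sub_add_eq_add_sub, sub_nonneg]
      exact (fract_lt_one b).le.trans (le_add_of_nonneg_left (fract_nonneg a)),
    add_lt_of_neg_left _ (sub_neg.2 h), ⌊a⌋ - ⌊b⌋ - 1, by
      rw [cast_sub, cast_sub, cast_one, ← self_sub_floor a, ← self_sub_floor b]; abel⟩

end Int

theorem Irrational.fract_pos {x : ℝ} (h : Irrational x) : 0 < fract x :=
  Int.fract_pos.2 (h.ne_int _)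

theorem exists_fract_nat_mul_lt_or_gt (α : ℝ) {c : ℝ} (hc : 0 < c) :
    ∃ k : ℕ, 0 < k ∧ (fract (k * α) < c ∨ 1 - c < fract (k * α)) := by
  obtain ⟨n, hn⟩ := exists_nat_one_div_lt hc
  obtain ⟨k, hk, -, hkα⟩ := Real.exists_nat_abs_mul_sub_round_le α n.succ_pos
  rw [abs_sub_round_eq_min, min_le_iff] at hkα
  have : 1 / ((n.succ : ℕ) + 1 : ℝ) ≤ 1 / (n + 1) := by gcongr; linarith
  exact ⟨k, hk, hkα.imp (fun h => by linarith) (fun h => by linarith)⟩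

theorem exists_one_sub_lt_nat_mul_lt_one {u : ℝ} (hu : Irrational u) (hu0 : 0 < u) (hu1 : u < 1) :
    ∃ j : ℕ, 0 < j ∧ 1 - u < j * u ∧ j * u < 1 := by
  set j := ⌊1 / u⌋₊
  have hj : 0 < j := Nat.floor_pos.2 (by rw [le_div_iff₀ hu0]; linarith)
  have hle : j * u ≤ 1 := (le_div_iff₀ hu0).1 (Nat.floor_le (by positivity))
  have hgt : 1 < (j + 1) * u := (div_lt_iff₀ hu0).1 (Nat.lt_floor_add_one _)
  refine ⟨j, hj, by linarith, hle.lt_of_ne ?_⟩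
  exact_mod_cast (hu.natCast_mul hj.ne').ne_nat 1

theorem exists_fract_nat_mul_gt_of_lt {α c : ℝ} (hα : Irrational α) {k : ℕ} (hk : 0 < k)
    (h : fract (k * α) < c) : ∃ m : ℕ, 0 < m ∧ 1 - c < fract (m * α) := by
  have hkα := hα.natCast_mul hk.ne'
  have hu : Irrational (fract (k * α)) := by rw [← self_sub_floor]; exact hkα.sub_intCast _
  obtain ⟨j, hj, hgt, hlt⟩ :=
    exists_one_sub_lt_nat_mul_lt_one hu hkα.fract_pos (fract_lt_one _)
  have hjk : fract ((j * k : ℕ) * α) = j * fract (k * α) :=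
    fract_eq_iff.2 ⟨by positivity, hlt, j * ⌊k * α⌋, by
      push_cast; rw [← self_sub_floor]; ring⟩
  exact ⟨j * k, by positivity, by rw [hjk]; linarith⟩

theorem fract_nat_mul_neg {α : ℝ} (hα : Irrational α) {k : ℕ} (hk : 0 < k) :
    fract (k * -α) = 1 - fract (k * α) := by
  rw [mul_neg, fract_neg (hα.natCast_mul hk.ne').fract_pos.ne']

theorem exists_fract_nat_mul_lt_of_gt {α c : ℝ} (hα : Irrational α) {k : ℕ} (hk : 0 < k)
    (h : 1 - c < fract (k * α)) : ∃ m : ℕ, 0 < m ∧ fract (m * α) < c := by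
  obtain ⟨m, hm, hgt⟩ :=
    exists_fract_nat_mul_gt_of_lt (c := c) hα.neg hk (by rw [fract_nat_mul_neg hα hk]; linarith)
  exact ⟨m, hm, by rw [fract_nat_mul_neg hα hm] at hgt; linarith⟩

theorem exists_fract_nat_mul_lt_and_exists_gt {α c : ℝ} (hα : Irrational α) (hc : 0 < c) :
    (∃ m : ℕ, 0 < m ∧ fract (m * α) < c) ∧
      ∃ m : ℕ, 0 < m ∧ 1 - c < fract (m * α) := by
  obtain ⟨k, hk, hsmall | hlarge⟩ := exists_fract_nat_mul_lt_or_gt α hc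
  · exact ⟨⟨k, hk, hsmall⟩, exists_fract_nat_mul_gt_of_lt hα hk hsmall⟩
  · exact ⟨exists_fract_nat_mul_lt_of_gt hα hk hlarge, k, hk, hlarge⟩

variable {α β : ℝ} {b d i e : ℕ}

theorem fract_mul_add_add_lt (hb : fract (b * α) < β) (hd : 1 - β < fract (d * α))
    (hi : fract (i * α) ∈ Set.Ico (β - fract (b * α)) (1 - fract (d * α))) :
    fract ((i + (b + d : ℕ) : ℝ) * α) < β := by
  obtain ⟨hlo, hhi⟩ := hi
  have hid : fract ((i + d : ℝ) * α) = fract (i * α) + fract (d * α) := by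
    rw [add_mul]; exact fract_add_of_fract_add_fract_lt_one (by linarith)
  have hibd : fract ((i + (b + d : ℕ) : ℝ) * α) =
      fract (i * α) + fract (d * α) + fract (b * α) - 1 := by
    rw [Nat.cast_add, ← hid, show ((i : ℝ) + (b + d)) * α = (i + d) * α + b * α by ring]
    exact fract_add_of_one_le_fract_add_fract (by rw [hid]; linarith)
  linarith

theorem add_le_of_fract_nat_mul_lt (hbmin : ∀ m : ℕ, 0 < m → fract (m * α) < β → b ≤ m)
    (hdmin : ∀ m : ℕ, 0 < m → 1 - β < fract (m * α) → d ≤ m)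
    (hb : fract (b * α) < β) (he : 0 < e)
    (heb : fract (e * α) < fract (b * α)) : b + d ≤ e := by
  have hbe : b < e := (hbmin e he (heb.trans hb)).lt_of_ne (by rintro rfl; exact heb.false)
  have hfract : fract ((e - b : ℕ) * α) = fract (e * α) - fract (b * α) + 1 := by
    rw [Nat.cast_sub hbe.le, sub_mul]; exact fract_sub_of_fract_lt heb
  have := hdmin (e - b) (by omega) (by rw [hfract]; linarith [fract_nonneg ((e : ℝ) * α)])
  omega

theorem add_le_of_lt_fract_nat_mul (hbmin : ∀ m : ℕ, 0 < m → fract (m * α) < β → b ≤ m)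
    (hdmin : ∀ m : ℕ, 0 < m → 1 - β < fract (m * α) → d ≤ m)
    (hd : 1 - β < fract (d * α)) (he : 0 < e)
    (hde : fract (d * α) < fract (e * α)) : b + d ≤ e := by
  have hde' : d < e := (hdmin e he (hd.trans hde)).lt_of_ne (by rintro rfl; exact hde.false)
  have hfract : fract ((e - d : ℕ) * α) = fract (e * α) - fract (d * α) := by
    rw [Nat.cast_sub hde'.le, sub_mul]; exact fract_sub_of_fract_le hde.le
  have := hbmin (e - d) (by omega) (by rw [hfract]; linarith [fract_lt_one ((e : ℝ) * α)])
  omega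

theorem add_le_of_fract_mul_add_lt (hbmin : ∀ m : ℕ, 0 < m → fract (m * α) < β → b ≤ m)
    (hdmin : ∀ m : ℕ, 0 < m → 1 - β < fract (m * α) → d ≤ m)
    (hα : Irrational α) (hb : fract (b * α) < β)
    (hd : 1 - β < fract (d * α))
    (hi : fract (i * α) ∈ Set.Ico (β - fract (b * α)) (1 - fract (d * α))) (he : 0 < e)
    (hie : fract ((i + e : ℝ) * α) < β) : b + d ≤ e := by
  obtain ⟨hlo, hhi⟩ := hi
  have hpos : 0 < fract ((i + e : ℝ) * α) :=
    mod_cast (hα.natCast_mul (by omega : i + e ≠ 0)).fract_pos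
  rw [add_mul] at hie hpos
  rcases lt_or_ge (fract (i * α) + fract (e * α)) 1 with hsum | hsum
  · rw [fract_add_of_fract_add_fract_lt_one hsum] at hie
    exact add_le_of_fract_nat_mul_lt hbmin hdmin hb he (by linarith)
  · rw [fract_add_of_one_le_fract_add_fract hsum] at hpos
    exact add_le_of_lt_fract_nat_mul hbmin hdmin hd he (by linarith)

end

theorem three_gap_sum_gap_general
    (α β : ℝ) (hirr : Irrational α)
    (hβ : β ∈ Set.Ioo (0 : ℝ) 1) :
    let gap : ℕ → ℕ := fun i => sInf {e : ℕ | 0 < e ∧ Int.fract (((i : ℝ) + (e : ℝ)) * α) < β}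
    let b : ℕ := sInf {m : ℕ | 0 < m ∧ Int.fract ((m : ℝ) * α) < β}
    let d : ℕ := sInf {m : ℕ | 0 < m ∧ 1 - β < Int.fract ((m : ℝ) * α)}
    let s : ℝ := Int.fract ((b : ℝ) * α)
    let t : ℝ := 1 - Int.fract ((d : ℝ) * α)
    ∀ i : ℕ, Int.fract ((i : ℝ) * α) ∈ Set.Ico (β - s) t → gap i = b + d := by
  intro gap b d s t i hi
  obtain ⟨hsmall, hlarge⟩ := exists_fract_nat_mul_lt_and_exists_gt hirr hβ.1
  have hb : 0 < b ∧ Int.fract (b * α) < β := Nat.sInf_mem hsmall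
  have hd : 0 < d ∧ 1 - β < Int.fract (d * α) := Nat.sInf_mem hlarge
  have hbmin (m : ℕ) (hm : 0 < m) (hmβ : Int.fract (m * α) < β) : b ≤ m :=
    Nat.sInf_le ⟨hm, hmβ⟩
  have hdmin (m : ℕ) (hm : 0 < m) (hmβ : 1 - β < Int.fract (m * α)) : d ≤ m :=
    Nat.sInf_le ⟨hm, hmβ⟩
  refine IsLeast.csInf_eq ⟨⟨by omega, fract_mul_add_add_lt hb.2 hd.2 hi⟩, ?_⟩
  rintro e ⟨he, hie⟩
  exact add_le_of_fract_mul_add_lt hbmin hdmin hirr hb.2 hd.2 hi he hie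

/-- In the three-gap setting with `β < max(α, 1-α)`: if `{iα} ∈ [β - s, t)`,
then the gap after `i` equals `b + d`. -/
theorem three_gap_sum_gap
    (α β : ℝ) (hα : α ∈ Set.Ioo (0 : ℝ) 1) (hirr : Irrational α)
    (hβ : β ∈ Set.Ioo (0 : ℝ) 1) (hβmax : β < max α (1 - α)) :
    let gap : ℕ → ℕ := fun i => sInf {e : ℕ | 0 < e ∧ Int.fract (((i : ℝ) + (e : ℝ)) * α) < β}
    let b : ℕ := sInf {m : ℕ | 0 < m ∧ Int.fract ((m : ℝ) * α) < β}
    let d : ℕ := sInf {m : ℕ | 0 < m ∧ 1 - β < Int.fract ((m : ℝ) * α)}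
    let s : ℝ := Int.fract ((b : ℝ) * α)
    let t : ℝ := 1 - Int.fract ((d : ℝ) * α)
    ∀ i : ℕ, Int.fract ((i : ℝ) * α) ∈ Set.Ico (β - s) t → gap i = b + d :=
  three_gap_sum_gap_general α β hirr hβ
end
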